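/- arXiv:math/0510160 — 3 statements merged into one kernel-verified Lean document; each statement's English description precedes it below -/
import Mathlib

section
/- Let F : C → D be a k-linear equivalence of small k-linear categories and M a D-bimodule. Then the natural map from H_0(D, M) to H_0(C, FM) is an isomorphism, where H_0 of a category E with coefficients in a bimodule N is the quotient of the direct sum of the N(x,x) by the subspace generated by all elements f·n − n·f for f : x → y and n ∈ N(y,x). -/
/-!
The map `H₀(C, FM) → H₀(D, M)`, `[n]_x ↦ [n]_{Fx}`, exists for any functor `F`. For an
equivalence with inverse `G` and counit `ε : G ⋙ F ≅ 𝟭 D`, an inverse sends `[n]_d` to the class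
at `G d` of `n` conjugated by `ε_d`. Both composites are the identity because in `H₀` conjugating
by an isomorphism `u : a ≅ b` does not change a class: `[m]_b = [u⁻¹·m·u]_a` is the defining
relation `f·n = n·f` for `f = u` and `n = u⁻¹·m`.
-/

open CategoryTheory Opposite DirectSum

/-- The relations submodule defining `H₀`. -/
def H0rel {E : Type} [SmallCategory E] [DecidableEq E] {k : Type} [Field k]
    (M : Eᵒᵖ × E ⥤ ModuleCat.{0} k) :
    Submodule k (⨁ x : E, M.obj (op x, x)) :=
  Submodule.span k {a | ∃ (x y : E) (f : x ⟶ y) (n : M.obj (op y, x)),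
    a = DirectSum.of (fun x : E => M.obj (op x, x)) y
          (M.map ((𝟙 (op y), f) : (op y, x) ⟶ (op y, y)) n)
      - DirectSum.of (fun x : E => M.obj (op x, x)) x
          (M.map ((f.op, 𝟙 x) : (op y, x) ⟶ (op x, x)) n)}

/-- `H₀` of a category with coefficients in a bimodule. -/
abbrev H₀ {E : Type} [SmallCategory E] [DecidableEq E] {k : Type} [Field k]
    (M : Eᵒᵖ × E ⥤ ModuleCat.{0} k) :=
  (⨁ x : E, M.obj (op x, x)) ⧸ H0rel M

theorem CategoryTheory.Functor.map_map_apply_of_comp_eq {R : Type*} [Ring R] {A : Type*}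
    [Category A] (G : A ⥤ ModuleCat R) {p q q' r : A} {f : p ⟶ q} {g : q ⟶ r} {f' : p ⟶ q'}
    {g' : q' ⟶ r} (h : f ≫ g = f' ≫ g') (n : G.obj p) :
    G.map g (G.map f n) = G.map g' (G.map f' n) := by
  rw [← ModuleCat.comp_apply, ← G.map_comp, h, G.map_comp, ModuleCat.comp_apply]

theorem CategoryTheory.Functor.map_map_apply_of_comp_eq_id {R : Type*} [Ring R] {A : Type*}
    [Category A] (G : A ⥤ ModuleCat R) {p q : A} {f : p ⟶ q} {g : q ⟶ p} (h : f ≫ g = 𝟙 p)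
    (n : G.obj p) : G.map g (G.map f n) = n := by
  rw [← ModuleCat.comp_apply, ← G.map_comp, h, G.map_id, ModuleCat.id_apply]

namespace H₀

variable {k : Type} [Field k]

section

variable {E : Type} [SmallCategory E] [DecidableEq E]
  (N : Eᵒᵖ × E ⥤ ModuleCat.{0} k)

noncomputable def mk (x : E) : N.obj (op x, x) →ₗ[k] H₀ N :=
  (H0rel N).mkQ ∘ₗ DirectSum.lof k E (fun x => N.obj (op x, x)) x

theorem mk_apply (x : E) (n : N.obj (op x, x)) :
    mk N x n = Submodule.Quotient.mk (DirectSum.of (fun x : E => N.obj (op x, x)) x n) := by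
  simp [mk, DirectSum.lof_eq_of]

theorem mk_map_comm {x y : E} (f : x ⟶ y) (n : N.obj (op y, x)) :
    mk N y (N.map ((𝟙 (op y), f) : (op y, x) ⟶ (op y, y)) n) =
      mk N x (N.map ((f.op, 𝟙 x) : (op y, x) ⟶ (op x, x)) n) := by
  rw [mk_apply, mk_apply, Submodule.Quotient.eq]
  exact Submodule.subset_span ⟨x, y, f, n, rfl⟩

theorem mk_conj {a b : E} (u : a ≅ b) (m : N.obj (op b, b)) :
    mk N b m = mk N a (N.map ((u.hom.op, u.inv) : (op b, b) ⟶ (op a, a)) m) := by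
  have h := mk_map_comm N u.hom (N.map ((𝟙 (op b), u.inv) : (op b, b) ⟶ (op b, a)) m)
  simpa [← ModuleCat.comp_apply, ← N.map_comp] using h

variable {N} {V : Type*} [AddCommGroup V] [Module k V]

noncomputable def desc (g : ∀ x, N.obj (op x, x) →ₗ[k] V)
    (hg : ∀ {x y : E} (f : x ⟶ y) (n : N.obj (op y, x)),
      g y (N.map ((𝟙 (op y), f) : (op y, x) ⟶ (op y, y)) n) =
        g x (N.map ((f.op, 𝟙 x) : (op y, x) ⟶ (op x, x)) n)) :
    H₀ N →ₗ[k] V :=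
  (H0rel N).liftQ (DirectSum.toModule k E V g) <| by
    rw [H0rel, Submodule.span_le]
    rintro _ ⟨x, y, f, n, rfl⟩
    simp [← DirectSum.lof_eq_of k, hg]

@[simp]
theorem desc_mk (g : ∀ x, N.obj (op x, x) →ₗ[k] V) hg (x : E) (n : N.obj (op x, x)) :
    desc g hg (mk N x n) = g x n := by
  rw [desc, mk, LinearMap.comp_apply, Submodule.mkQ_apply, Submodule.liftQ_apply,
    DirectSum.toModule_lof]

theorem hom_ext {φ ψ : H₀ N →ₗ[k] V} (h : ∀ x n, φ (mk N x n) = ψ (mk N x n)) : φ = ψ :=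
  Submodule.linearMap_qext _ <| DirectSum.linearMap_ext _ fun x => LinearMap.ext (h x)

end

section Restrict

variable {C D : Type} [SmallCategory C] [SmallCategory D]
  [DecidableEq C] [DecidableEq D] (M : Dᵒᵖ × D ⥤ ModuleCat.{0} k)

noncomputable def ofRestrict (F : C ⥤ D) : H₀ (F.op.prod F ⋙ M) →ₗ[k] H₀ M :=
  desc (fun x => mk M (F.obj x)) fun f n => by simpa using mk_map_comm M (F.map f) n

@[simp]
theorem ofRestrict_mk (F : C ⥤ D) (x : C) (n : M.obj (op (F.obj x), F.obj x)) :
    ofRestrict M F (mk _ x n) = mk M (F.obj x) n :=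
  desc_mk ..

noncomputable def toRestrict (e : C ≌ D) : H₀ M →ₗ[k] H₀ (e.functor.op.prod e.functor ⋙ M) :=
  desc (fun d => mk _ (e.inverse.obj d) ∘ₗ
      (M.map (((e.counit.app d).op, e.counitInv.app d) :
        (op d, d) ⟶ (op (e.functor.obj (e.inverse.obj d)), e.functor.obj (e.inverse.obj d)))).hom)
    fun {d d'} f n => by
      have h := mk_map_comm (e.functor.op.prod e.functor ⋙ M) (e.inverse.map f)
        (M.map (((e.counit.app d').op, e.counitInv.app d) :
          (op d', d) ⟶ (op (e.functor.obj (e.inverse.obj d')), e.functor.obj (e.inverse.obj d))) n)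
      -- both sides of `h` reduce to the goal by naturality of the counit
      convert h using 2 <;> rw [LinearMap.comp_apply] <;>
        refine congrArg _ (M.map_map_apply_of_comp_eq ?_ n) <;> refine Prod.ext ?_ ?_ <;> simp

@[simp]
theorem toRestrict_mk (e : C ≌ D) (d : D) (n : M.obj (op d, d)) :
    toRestrict M e (mk M d n) = mk _ (e.inverse.obj d) (M.map
      (((e.counit.app d).op, e.counitInv.app d) :
        (op d, d) ⟶ (op (e.functor.obj (e.inverse.obj d)), e.functor.obj (e.inverse.obj d))) n) :=
  desc_mk ..

theorem ofRestrict_comp_toRestrict (e : C ≌ D) :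
    ofRestrict M e.functor ∘ₗ toRestrict M e = .id := by
  refine hom_ext fun d n => ?_
  rw [LinearMap.comp_apply, toRestrict_mk, ofRestrict_mk, LinearMap.id_apply]
  exact (mk_conj M (e.counitIso.app d) n).symm

theorem toRestrict_comp_ofRestrict (e : C ≌ D) :
    toRestrict M e ∘ₗ ofRestrict M e.functor = .id := by
  refine hom_ext fun x n => ?_
  rw [LinearMap.comp_apply, ofRestrict_mk, toRestrict_mk, LinearMap.id_apply]
  -- conjugating back by the unit undoes the counit, by the triangle identities
  refine (mk_conj _ (e.unitIso.app x) _).trans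
    (congrArg _ (M.map_map_apply_of_comp_eq_id (Prod.ext ?_ ?_) n))
  · simp [← op_comp]
  · simp

noncomputable def restrictEquiv (e : C ≌ D) : H₀ (e.functor.op.prod e.functor ⋙ M) ≃ₗ[k] H₀ M :=
  .ofLinearMap (ofRestrict M e.functor) (toRestrict M e) (ofRestrict_comp_toRestrict M e)
    (toRestrict_comp_ofRestrict M e)

end Restrict

end H₀

theorem stmt_5_general (k : Type) [Field k] (C D : Type) [SmallCategory C] [SmallCategory D]
    [DecidableEq C] [DecidableEq D] (F : C ⥤ D) [F.IsEquivalence]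
    (M : Dᵒᵖ × D ⥤ ModuleCat.{0} k) :
    ∃ e : H₀ M ≃ₗ[k] H₀ (F.op.prod F ⋙ M),
      ∀ (x : C) (n : M.obj (op (F.obj x), F.obj x)),
        e (Submodule.Quotient.mk
            (DirectSum.of (fun y : D => M.obj (op y, y)) (F.obj x) n)) =
        Submodule.Quotient.mk
          (DirectSum.of (fun x : C => ((F.op.prod F ⋙ M).obj (op x, x) : Type)) x n) := by
  refine ⟨(H₀.restrictEquiv M F.asEquivalence).symm, fun x n => ?_⟩
  rw [← H₀.mk_apply, ← H₀.mk_apply]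
  exact (LinearEquiv.symm_apply_eq _).2 (H₀.ofRestrict_mk M F x n).symm

theorem stmt_5 (k : Type) [Field k] (C D : Type) [SmallCategory C] [Preadditive C]
    [CategoryTheory.Linear k C] [SmallCategory D] [Preadditive D]
    [CategoryTheory.Linear k D] [DecidableEq C] [DecidableEq D]
    (F : C ⥤ D) [F.Additive] [F.Linear k] [F.IsEquivalence]
    (M : Dᵒᵖ × D ⥤ ModuleCat.{0} k) :
    ∃ e : H₀ M ≃ₗ[k] H₀ (F.op.prod F ⋙ M),
      ∀ (x : C) (n : M.obj (op (F.obj x), F.obj x)),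
        e (Submodule.Quotient.mk
            (DirectSum.of (fun y : D => M.obj (op y, y)) (F.obj x) n)) =
        Submodule.Quotient.mk
          (DirectSum.of (fun x : C => ((F.op.prod F ⋙ M).obj (op x, x) : Type)) x n) :=
  stmt_5_general k C D F M
end

section
/- Let D be a G-graded small k-linear category and C = D^1 its degree-1 (coinvariant) subcategory. Then D is strongly graded if and only if the extension C ⊆ D is kG-Galois, i.e. the canonical map β : D ⊗_C D → D ⊗ kG defined on components by f ⊗_C g ↦ Σ_{s∈G} (f ∘ g_s) ⊗ s is an isomorphism of bimodules (where g_s denotes the degree-s component of g). -/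
/-!
If `D` is strongly graded, then for every object `x` and every `s` the identity of `x` is a sum
`∑ gᵢ ≫ fᵢ` with `gᵢ` of degree `s` and `fᵢ` of degree `s⁻¹`. The map `h ↦ ∑ (fᵢ ≫ h) ⊗ gᵢ`
inverts `β` on the summand `s`: the relations of `D ⊗_C D` move the degree-one morphism `fᵢ ≫ g`
across the tensor sign, and `∑ gᵢ ≫ fᵢ ≫ g = g`.

Conversely, if `β` is onto, take a preimage of `𝟙 z` in the summand `s⁻¹`. Its image there is a
sum of composites `g ≫ f` with `g` of degree `s⁻¹`; projecting to degree one replaces each `f` by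
its degree-`s` component, so `𝟙 z ∈ D^s · D^{s⁻¹}`. Precomposing with `h` of degree `st` then puts
`h` in `D^s · D^t`.
-/

open CategoryTheory DirectSum TensorProduct

section

variable {k : Type} [Field k] {G : Type} [Group G] [DecidableEq G]
variable {D : Type} [Category D] [Preadditive D] [CategoryTheory.Linear k D] [DecidableEq D]

/-- `Σ_y D^s(z,y)·D^t(y,x)`. -/
def gradedSpan (deg : ∀ x y : D, G → Submodule k (x ⟶ y)) (s t : G) (x z : D) :
    Submodule k (x ⟶ z) :=
  Submodule.span k {h | ∃ (y : D) (g : x ⟶ y) (f : y ⟶ z),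
    g ∈ deg x y t ∧ f ∈ deg y z s ∧ h = g ≫ f}

/-- The relations defining the tensor product `D ⊗_C D` over the degree-1
subcategory `C = D^1`: `m·f ⊗ n − m ⊗ f·n` for `f` of degree `1`. -/
noncomputable def tensorRel (deg : ∀ x y : D, G → Submodule k (x ⟶ y)) (x z : D) :
    Submodule k (⨁ y : D, ((y ⟶ z) ⊗[k] (x ⟶ y))) :=
  Submodule.span k {a | ∃ (y y' : D) (f : y ⟶ y') (_ : f ∈ deg y y' 1)
      (m : y' ⟶ z) (n : x ⟶ y),
    a = DirectSum.of (fun y : D => ((y ⟶ z) ⊗[k] (x ⟶ y))) y ((f ≫ m) ⊗ₜ[k] n)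
      - DirectSum.of (fun y : D => ((y ⟶ z) ⊗[k] (x ⟶ y))) y' (m ⊗ₜ[k] (n ≫ f))}

/-- The component at `(x, z)` of the `C`-bimodule `D ⊗_C D`, `C = D^1`. -/
abbrev TensorCD (deg : ∀ x y : D, G → Submodule k (x ⟶ y)) (x z : D) :=
  (⨁ y : D, ((y ⟶ z) ⊗[k] (x ⟶ y))) ⧸ tensorRel deg x z

end

section GradedHoms

variable {k : Type} [Field k] {G : Type}
variable {D : Type} [Category D] [Preadditive D] [CategoryTheory.Linear k D]
variable {deg : ∀ x y : D, G → Submodule k (x ⟶ y)}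

theorem exists_sum_comp_eq_of_mem_gradedSpan {s t : G} {x z : D} {a : x ⟶ z}
    (ha : a ∈ gradedSpan deg s t x z) :
    ∃ (n : ℕ) (y : Fin n → D) (g : ∀ i, x ⟶ y i) (f : ∀ i, y i ⟶ z),
      (∀ i, g i ∈ deg x (y i) t) ∧ (∀ i, f i ∈ deg (y i) z s) ∧ ∑ i, g i ≫ f i = a := by
  obtain ⟨n, c, v, rfl⟩ := Submodule.mem_span_set'.1 ha
  choose y g f hg hf hgf using fun i => (v i).2
  refine ⟨n, y, fun i => c i • g i, f, fun i => Submodule.smul_mem _ _ (hg i), hf, ?_⟩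
  simp only [Linear.smul_comp, hgf]

section Decomposition

variable [DecidableEq G] [∀ x y, Decomposition (deg x y)]

variable (deg) in
noncomputable def homProj (u : G) (x y : D) : (x ⟶ y) →ₗ[k] (x ⟶ y) :=
  (deg x y u).subtype ∘ₗ component k G (fun s => deg x y s) u ∘ₗ
    (decomposeLinearEquiv (deg x y)).toLinearMap

theorem homProj_mem (u : G) {x y : D} (g : x ⟶ y) : homProj deg u x y g ∈ deg x y u :=
  Subtype.prop _

theorem homProj_of_mem {u w : G} {x y : D} {g : x ⟶ y} (hg : g ∈ deg x y w) :
    homProj deg u x y g = if w = u then g else 0 := by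
  change (decompose (deg x y) g u : x ⟶ y) = _
  split_ifs with h
  · exact h ▸ decompose_of_mem_same _ hg
  · exact decompose_of_mem_ne _ hg h

variable [DecidableEq D]

-- `f ⊗ g ↦ ∑ₛ (gₛ ≫ f)` in the summand `s`, where `gₛ` is the degree-`s` component of `g`.
variable (deg) in
noncomputable def preGaloisMap (x z : D) :
    (⨁ y : D, ((y ⟶ z) ⊗[k] (x ⟶ y))) →ₗ[k] ⨁ _ : G, (x ⟶ z) :=
  toModule k D _ fun y =>
    toModule k G _ (fun s => lof k G (fun _ => x ⟶ z) s ∘ₗ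
        TensorProduct.lift ((Linear.comp x y z).flip.compl₂ (deg x y s).subtype)) ∘ₗ
      (TensorProduct.directSumRight k k (y ⟶ z) fun s => deg x y s).toLinearMap ∘ₗ
      (decomposeLinearEquiv (deg x y)).toLinearMap.lTensor (y ⟶ z)

theorem preGaloisMap_of_tmul {x z y : D} (f : y ⟶ z) {s : G} {g : x ⟶ y} (hg : g ∈ deg x y s) :
    preGaloisMap deg x z (of (fun y : D => ((y ⟶ z) ⊗[k] (x ⟶ y))) y (f ⊗ₜ[k] g)) =
      of (fun _ : G => (x ⟶ z)) s (g ≫ f) := by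
  lift g to deg x y s using hg
  simp [preGaloisMap, ← lof_eq_of k]

end Decomposition

variable [Group G]

variable (deg) in
def IsGradedComp : Prop :=
  ∀ ⦃x y z : D⦄ ⦃s t : G⦄ ⦃g : x ⟶ y⦄ ⦃f : y ⟶ z⦄,
    g ∈ deg x y t → f ∈ deg y z s → g ≫ f ∈ deg x z (s * t)

theorem gradedSpan_le (hcomp : IsGradedComp deg) (s t : G) (x z : D) :
    gradedSpan deg s t x z ≤ deg x z (s * t) :=
  Submodule.span_le.2 fun _ ⟨_, _, _, hg, hf, h⟩ => h ▸ hcomp hg hf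

theorem comp_mem_gradedSpan
    (hcomp : IsGradedComp deg) {s t u : G} {x w z : D} {h : x ⟶ w} (hh : h ∈ deg x w u)
    {a : w ⟶ z} (ha : a ∈ gradedSpan deg s t w z) : h ≫ a ∈ gradedSpan deg s (t * u) x z := by
  have : (gradedSpan deg s t w z).map (Linear.leftComp k z h) ≤
      gradedSpan deg s (t * u) x z := by
    rw [gradedSpan, Submodule.map_span, Submodule.span_le]
    rintro _ ⟨_, ⟨y, g, f, hg, hf, rfl⟩, rfl⟩
    exact Submodule.subset_span ⟨y, h ≫ g, f, hcomp hh hg, hf, (Category.assoc _ _ _).symm⟩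
  exact this ⟨a, ha, rfl⟩

theorem gradedSpan_eq_of_id_mem
    (hcomp : IsGradedComp deg) (hunit : ∀ (z : D) (s : G), 𝟙 z ∈ gradedSpan deg s s⁻¹ z z)
    (s t : G) (x z : D) : gradedSpan deg s t x z = deg x z (s * t) := by
  refine le_antisymm (gradedSpan_le hcomp s t x z) fun h hh => ?_
  simpa using comp_mem_gradedSpan hcomp hh (hunit z s)

section

variable [DecidableEq G] [∀ x y, Decomposition (deg x y)]

theorem homProj_comp_of_mem
    (hcomp : IsGradedComp deg) {u : G} {x y : D} {g : x ⟶ y} (hg : g ∈ deg x y u) (v : G)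
    {z : D} (f : y ⟶ z) :
    homProj deg v x z (g ≫ f) = g ≫ homProj deg (v * u⁻¹) y z f := by
  suffices homProj deg v x z ∘ₗ Linear.leftComp k z g =
      Linear.leftComp k z g ∘ₗ homProj deg (v * u⁻¹) y z from LinearMap.congr_fun this f
  refine decompose_lhom_ext (deg y z) fun w => LinearMap.ext fun ⟨f, hf⟩ => ?_
  simp only [LinearMap.comp_apply, Submodule.subtype_apply, Linear.leftComp_apply,
    homProj_of_mem hf, homProj_of_mem (hcomp hg hf), eq_mul_inv_iff_mul_eq]
  split_ifs <;> simp

end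

variable [DecidableEq D]

variable (deg) in
noncomputable def tensorCDMk (x z y : D) : (y ⟶ z) →ₗ[k] (x ⟶ y) →ₗ[k] TensorCD deg x z :=
  (TensorProduct.mk k _ _).compr₂
    ((tensorRel deg x z).mkQ ∘ₗ lof k D (fun y : D => ((y ⟶ z) ⊗[k] (x ⟶ y))) y)

theorem tensorCDMk_apply {x z y : D} (f : y ⟶ z) (g : x ⟶ y) :
    tensorCDMk deg x z y f g =
      Submodule.Quotient.mk (of (fun y : D => ((y ⟶ z) ⊗[k] (x ⟶ y))) y (f ⊗ₜ[k] g)) :=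
  rfl

theorem tensorCDMk_comp_left {x z y y' : D} {c : y ⟶ y'} (hc : c ∈ deg y y' 1) (m : y' ⟶ z)
    (n : x ⟶ y) : tensorCDMk deg x z y (c ≫ m) n = tensorCDMk deg x z y' m (n ≫ c) := by
  rw [tensorCDMk_apply, tensorCDMk_apply, Submodule.Quotient.eq]
  exact Submodule.subset_span ⟨y, y', c, hc, m, n, rfl⟩

variable (deg) in
noncomputable def sumTensorCDMk (x z : D) {n : ℕ} (y : Fin n → D) (g : ∀ i, x ⟶ y i)
    (f : ∀ i, y i ⟶ x) : (x ⟶ z) →ₗ[k] TensorCD deg x z :=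
  ∑ i, (tensorCDMk deg x z (y i)).flip (g i) ∘ₗ Linear.leftComp k z (f i)

theorem sumTensorCDMk_apply {x z : D} {n : ℕ} (y : Fin n → D) (g : ∀ i, x ⟶ y i)
    (f : ∀ i, y i ⟶ x) (h : x ⟶ z) :
    sumTensorCDMk deg x z y g f h = ∑ i, tensorCDMk deg x z (y i) (f i ≫ h) (g i) := by
  simp [sumTensorCDMk]

theorem sumTensorCDMk_comp
    (hcomp : IsGradedComp deg) {x z w : D} {s : G} {n : ℕ} {y : Fin n → D} {g : ∀ i, x ⟶ y i}
    {f : ∀ i, y i ⟶ x} (hf : ∀ i, f i ∈ deg (y i) x s⁻¹) {g' : x ⟶ w} (hg' : g' ∈ deg x w s)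
    (f' : w ⟶ z) :
    sumTensorCDMk deg x z y g f (g' ≫ f') =
      tensorCDMk deg x z w f' ((∑ i, g i ≫ f i) ≫ g') := by
  have hfg' : ∀ i, f i ≫ g' ∈ deg (y i) w 1 := fun i => by
    simpa using hcomp (hf i) hg'
  simp only [sumTensorCDMk_apply, ← Category.assoc, tensorCDMk_comp_left (hfg' _),
    Preadditive.sum_comp, map_sum]

variable [DecidableEq G] [∀ x y, Decomposition (deg x y)]

theorem tensorCD_ext {x z : D} {N : Type*} [AddCommGroup N] [Module k N]
    {L L' : TensorCD deg x z →ₗ[k] N}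
    (h : ∀ (y : D) (f : y ⟶ z) (s : G) (g : x ⟶ y), g ∈ deg x y s →
      L (tensorCDMk deg x z y f g) = L' (tensorCDMk deg x z y f g)) : L = L' := by
  refine Submodule.linearMap_qext _ (linearMap_ext k fun y => TensorProduct.ext ?_)
  refine LinearMap.ext fun f => decompose_lhom_ext (deg x y) fun s => ?_
  exact LinearMap.ext fun ⟨g, hg⟩ => h y f s g hg

theorem tensorRel_le_ker_preGaloisMap (hcomp : IsGradedComp deg) (x z : D) :
    tensorRel deg x z ≤ LinearMap.ker (preGaloisMap deg x z) := by
  refine Submodule.span_le.2 ?_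
  rintro _ ⟨y, y', c, hc, m, n, rfl⟩
  suffices preGaloisMap deg x z ∘ₗ lof k D _ y ∘ₗ TensorProduct.mk k _ _ (c ≫ m) =
      preGaloisMap deg x z ∘ₗ lof k D _ y' ∘ₗ TensorProduct.mk k _ _ m ∘ₗ
        Linear.rightComp k x c by
    simpa [sub_eq_zero, lof_eq_of] using LinearMap.congr_fun this n
  refine decompose_lhom_ext (deg x y) fun s => LinearMap.ext fun ⟨n, hn⟩ => ?_
  have hnc : n ≫ c ∈ deg x y' s := by simpa using hcomp hn hc
  simp [lof_eq_of, preGaloisMap_of_tmul _ hn, preGaloisMap_of_tmul _ hnc]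

variable (deg) in
noncomputable def galoisMap (hcomp : IsGradedComp deg) (x z : D) :
    TensorCD deg x z →ₗ[k] ⨁ _ : G, (x ⟶ z) :=
  (tensorRel deg x z).liftQ (preGaloisMap deg x z) (tensorRel_le_ker_preGaloisMap hcomp x z)

theorem galoisMap_tensorCDMk
    (hcomp : IsGradedComp deg) {x z y : D} (f : y ⟶ z) {s : G} {g : x ⟶ y}
    (hg : g ∈ deg x y s) :
    galoisMap deg hcomp x z (tensorCDMk deg x z y f g) = of (fun _ : G => (x ⟶ z)) s (g ≫ f) :=
  preGaloisMap_of_tmul f hg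

theorem galoisMap_sumTensorCDMk
    (hcomp : IsGradedComp deg) {x z : D} {s : G} {n : ℕ} {y : Fin n → D} {g : ∀ i, x ⟶ y i}
    (hg : ∀ i, g i ∈ deg x (y i) s) (f : ∀ i, y i ⟶ x) (h : x ⟶ z) :
    galoisMap deg hcomp x z (sumTensorCDMk deg x z y g f h) =
      of (fun _ : G => (x ⟶ z)) s ((∑ i, g i ≫ f i) ≫ h) := by
  simp only [sumTensorCDMk_apply, map_sum, galoisMap_tensorCDMk hcomp _ (hg _),
    Preadditive.sum_comp, Category.assoc]

theorem galoisMap_bijective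
    (hcomp : IsGradedComp deg) {x : D} (hunit : ∀ s : G, 𝟙 x ∈ gradedSpan deg s⁻¹ s x x) (z : D) :
    Function.Bijective (galoisMap deg hcomp x z) := by
  choose n y g f hg hf hgf using fun s => exists_sum_comp_eq_of_mem_gradedSpan (hunit s)
  let γ : (⨁ _ : G, (x ⟶ z)) →ₗ[k] TensorCD deg x z :=
    toModule k G _ fun s => sumTensorCDMk deg x z (y s) (g s) (f s)
  have hγ : galoisMap deg hcomp x z ∘ₗ γ = LinearMap.id :=
    linearMap_ext k fun s => LinearMap.ext fun h => by
      simp only [γ, LinearMap.comp_apply, LinearMap.id_apply, toModule_lof]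
      rw [galoisMap_sumTensorCDMk hcomp (hg s), hgf, Category.id_comp, lof_eq_of]
  have hγ' : γ ∘ₗ galoisMap deg hcomp x z = LinearMap.id :=
    tensorCD_ext fun w f' s g' hg' => by
      simp [γ, galoisMap_tensorCDMk hcomp _ hg', ← lof_eq_of k,
        sumTensorCDMk_comp hcomp (hf s) hg', hgf]
  exact Function.bijective_iff_has_inverse.2
    ⟨γ, LinearMap.congr_fun hγ', LinearMap.congr_fun hγ⟩

theorem id_mem_gradedSpan_of_surjective
    (hcomp : IsGradedComp deg) {z : D} (hz : 𝟙 z ∈ deg z z 1)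
    (β : TensorCD deg z z →ₗ[k] ⨁ _ : G, (z ⟶ z))
    (hβ : ∀ (y : D) (f : y ⟶ z) (s : G) (g : z ⟶ y), g ∈ deg z y s →
      β (tensorCDMk deg z z y f g) = of (fun _ : G => (z ⟶ z)) s (g ≫ f))
    (hsurj : Function.Surjective β) (s : G) : 𝟙 z ∈ gradedSpan deg s s⁻¹ z z := by
  let Φ := homProj deg 1 z z ∘ₗ component k G (fun _ => z ⟶ z) s⁻¹ ∘ₗ β
  have hΦ : (gradedSpan deg s s⁻¹ z z).mkQ ∘ₗ Φ = 0 := tensorCD_ext fun y f u g hg => by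
    simp only [Φ, LinearMap.comp_apply, LinearMap.zero_apply, Submodule.mkQ_apply,
      Submodule.Quotient.mk_eq_zero, hβ y f u g hg, ← lof_eq_of k]
    rcases eq_or_ne u s⁻¹ with rfl | hu
    · rw [component.lof_self, homProj_comp_of_mem hcomp hg, one_mul, inv_inv]
      exact Submodule.subset_span ⟨y, g, _, hg, homProj_mem s f, rfl⟩
    · rw [component.of, dif_neg hu, map_zero]
      exact zero_mem _
  obtain ⟨ξ, hξ⟩ := hsurj (of _ s⁻¹ (𝟙 z))
  have hΦξ : Φ ξ = 𝟙 z := by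
    simp [Φ, hξ, ← lof_eq_of k, homProj_of_mem hz]
  rw [← hΦξ, ← Submodule.Quotient.mk_eq_zero]
  exact LinearMap.congr_fun hΦ ξ

end GradedHoms

section

variable {k : Type} [Field k] {G : Type} [Group G] [DecidableEq G]
variable {D : Type} [Category D] [Preadditive D] [CategoryTheory.Linear k D] [DecidableEq D]

theorem stmt_7 (deg : ∀ x y : D, G → Submodule k (x ⟶ y))
    (hinternal : ∀ x y : D, DirectSum.IsInternal (deg x y))
    (hcomp : ∀ {x y z : D} {s t : G} (g : x ⟶ y) (f : y ⟶ z),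
      g ∈ deg x y t → f ∈ deg y z s → g ≫ f ∈ deg x z (s * t))
    (hid : ∀ x : D, 𝟙 x ∈ deg x x 1) :
    (∀ (s t : G) (x z : D), gradedSpan deg s t x z = deg x z (s * t)) ↔
    ∃ β : ∀ x z : D, TensorCD deg x z ≃ₗ[k] (⨁ _ : G, (x ⟶ z)),
      ∀ (x z y : D) (f : y ⟶ z) (s : G) (g : x ⟶ y), g ∈ deg x y s →
        β x z (Submodule.Quotient.mk
            (DirectSum.of (fun y : D => ((y ⟶ z) ⊗[k] (x ⟶ y))) y (f ⊗ₜ[k] g))) =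
        DirectSum.of (fun _ : G => (x ⟶ z)) s (g ≫ f) := by
  let : ∀ x y, Decomposition (deg x y) := fun x y => (hinternal x y).chooseDecomposition
  have hgraded : IsGradedComp deg := @hcomp
  constructor
  · intro hsg
    have hunit : ∀ (x : D) (s : G), 𝟙 x ∈ gradedSpan deg s⁻¹ s x x := fun x s => by
      rw [hsg, inv_mul_cancel]
      exact hid x
    exact ⟨fun x z => LinearEquiv.ofBijective _ (galoisMap_bijective hgraded (hunit x) z),
      fun x z y f s g hg => galoisMap_tensorCDMk hgraded f hg⟩
  · rintro ⟨β, hβ⟩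
    exact gradedSpan_eq_of_id_mem hgraded fun z s => id_mem_gradedSpan_of_surjective hgraded
      (hid z) (β z z).toLinearMap (hβ z z) (β z z).surjective s

end
end

section
/- Let D be a strongly G-graded small k-linear category with degree-1 subcategory C = D^1. Then the map β : D ⊗_C D → D ⊗ kG, f ⊗_C g ↦ Σ_s (f ∘ g_s) ⊗ s, admits an explicit two-sided inverse α: choosing for each object x and each s ∈ G finitely many c_{s⁻¹,i} ∈ D^{s⁻¹}(x, y_i) and d_{s,i} ∈ D^s(y_i, x) with Σ_i c_{s⁻¹,i} ∘ d_{s,i} = id_x, the map α(f ⊗ s) = Σ_i (f ∘ c_{s⁻¹,i}) ⊗_C d_{s,i} satisfies α ∘ β = id and β ∘ α = id. -/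
/-!
STATEMENT 8: For a strongly `G`-graded `k`-linear category `D` with `C = D^1`,
given for each object `x` and each `s ∈ G` finitely many
`c_{s⁻¹,i} ∈ D^{s⁻¹}(x, y_i)` and `d_{s,i} ∈ D^s(y_i, x)` with
`Σ_i c_{s⁻¹,i} ∘ d_{s,i} = id_x`, the map
`α : D ⊗ kG → D ⊗_C D`, `f ⊗ s ↦ Σ_i (f ∘ c_{s⁻¹,i}) ⊗_C d_{s,i}`, is a
two-sided inverse of `β : D ⊗_C D → D ⊗ kG`, `f ⊗_C g ↦ Σ_s (f ∘ g_s) ⊗ s`.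
-/

open CategoryTheory DirectSum TensorProduct

section

variable {k : Type} [Field k] {G : Type} [Group G] [DecidableEq G]
variable {D : Type} [Category D] [Preadditive D] [CategoryTheory.Linear k D] [DecidableEq D]

set_option linter.unusedSectionVars false

/-!
On homogeneous elements `β (f ⊗ g) = (g ≫ f) ⊗ deg g`; this is well defined on `D ⊗_C D`
because sliding a degree-`1` morphism across `⊗_C` does not change the degree of the composite.
If `g` has degree `s`, every `c_{s⁻¹,i} ≫ g` has degree `1` and slides across `⊗_C`, so
`α (β (f ⊗ g)) = f ⊗ Σ_i d_{s,i} ≫ c_{s⁻¹,i} ≫ g = f ⊗ g`. Conversely `d_{s,i}` has degree `s`,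
so `β (α (f ⊗ s)) = (Σ_i d_{s,i} ≫ c_{s⁻¹,i} ≫ f) ⊗ s = f ⊗ s`.
-/

theorem DirectSum.IsInternal.induction_on {ι R M : Type*} [DecidableEq ι] [Semiring R]
    [AddCommMonoid M] [Module R M] {A : ι → Submodule R M} (h : IsInternal A)
    {motive : M → Prop} (m : M) (mem : ∀ i, ∀ x ∈ A i, motive x) (zero : motive 0)
    (add : ∀ x y, motive x → motive y → motive (x + y)) : motive m :=
  Submodule.iSup_induction A (motive := motive) (h.submodule_iSup_eq_top ▸ Submodule.mem_top)
    mem zero add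

namespace GradedCategory

variable {deg : ∀ x y : D, G → Submodule k (x ⟶ y)}

variable (deg) in
def CompRespectsDegree : Prop :=
  ∀ {x y z : D} {s t : G} (g : x ⟶ y) (f : y ⟶ z),
    g ∈ deg x y t → f ∈ deg y z s → g ≫ f ∈ deg x z (s * t)

section Beta

variable (hint : ∀ x y : D, IsInternal (deg x y))

noncomputable def decompose (x y : D) : (x ⟶ y) ≃ₗ[k] ⨁ s : G, deg x y s :=
  (LinearEquiv.ofBijective (coeLinearMap (deg x y)) (hint x y)).symm

theorem decompose_of_mem {x y : D} {s : G} {g : x ⟶ y} (hg : g ∈ deg x y s) :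
    decompose hint x y g = lof k G (fun s => deg x y s) s ⟨g, hg⟩ := by
  rw [decompose, LinearEquiv.symm_apply_eq, lof_eq_of]
  exact (coeLinearMap_of (deg x y) s ⟨g, hg⟩).symm

/-- `g ⊗ f ↦ Σ_s (g_s ≫ f) ⊗ s`, where `g_s` is the degree-`s` component of `g`. -/
noncomputable def gradedComp (x y z : D) : (x ⟶ y) →ₗ[k] (y ⟶ z) →ₗ[k] ⨁ _ : G, (x ⟶ z) :=
  toModule k G _ (fun s => ((Linear.comp x y z).comp (deg x y s).subtype).compr₂
      (lof k G (fun _ => (x ⟶ z)) s)) ∘ₗ (decompose hint x y).toLinearMap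

theorem gradedComp_of_mem {x y : D} (z : D) {s : G} {g : x ⟶ y} (hg : g ∈ deg x y s)
    (f : y ⟶ z) : gradedComp hint x y z g f = of (fun _ : G => (x ⟶ z)) s (g ≫ f) := by
  rw [gradedComp, LinearMap.comp_apply, LinearEquiv.coe_coe, decompose_of_mem hint hg,
    toModule_lof]
  rfl

theorem gradedComp_comp_of_mem_one (hcomp : CompRespectsDegree deg)
    {x y y' : D} (z : D) {f : y ⟶ y'} (hf : f ∈ deg y y' 1) (m : y' ⟶ z) (n : x ⟶ y) :
    gradedComp hint x y z n (f ≫ m) = gradedComp hint x y' z (n ≫ f) m := by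
  induction n using (hint x y).induction_on with
  | mem s n hn =>
    rw [gradedComp_of_mem hint z hn, gradedComp_of_mem hint z (one_mul s ▸ hcomp n f hn hf),
      Category.assoc]
  | zero => simp
  | add n n' h h' => simp only [map_add, LinearMap.add_apply, Preadditive.add_comp, h, h']

noncomputable def tensorToGraded (x z : D) :
    (⨁ y : D, ((y ⟶ z) ⊗[k] (x ⟶ y))) →ₗ[k] ⨁ _ : G, (x ⟶ z) :=
  toModule k D _ (fun y => TensorProduct.lift (gradedComp hint x y z).flip)

theorem tensorToGraded_of_tmul {x y z : D} (f : y ⟶ z) (g : x ⟶ y) :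
    tensorToGraded hint x z (of (fun y : D => ((y ⟶ z) ⊗[k] (x ⟶ y))) y (f ⊗ₜ[k] g)) =
      gradedComp hint x y z g f := by
  rw [tensorToGraded, ← lof_eq_of k, toModule_lof, lift.tmul, LinearMap.flip_apply]

theorem tensorRel_le_ker_tensorToGraded (hcomp : CompRespectsDegree deg)
    (x z : D) : tensorRel deg x z ≤ LinearMap.ker (tensorToGraded hint x z) := by
  rw [tensorRel, Submodule.span_le]
  rintro _ ⟨y, y', f, hf, m, n, rfl⟩
  rw [SetLike.mem_coe, LinearMap.mem_ker, map_sub, tensorToGraded_of_tmul,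
    tensorToGraded_of_tmul, gradedComp_comp_of_mem_one hint hcomp z hf, sub_self]

noncomputable def beta (hcomp : CompRespectsDegree deg) (x z : D) :
    TensorCD deg x z →ₗ[k] ⨁ _ : G, (x ⟶ z) :=
  (tensorRel deg x z).liftQ (tensorToGraded hint x z)
    (tensorRel_le_ker_tensorToGraded hint hcomp x z)

theorem beta_mk_of_mem (hcomp : CompRespectsDegree deg)
    {x y : D} (z : D) (f : y ⟶ z) {s : G} {g : x ⟶ y} (hg : g ∈ deg x y s) :
    beta hint hcomp x z (Submodule.Quotient.mk
        (of (fun y : D => ((y ⟶ z) ⊗[k] (x ⟶ y))) y (f ⊗ₜ[k] g))) =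
      of (fun _ : G => (x ⟶ z)) s (g ≫ f) := by
  unfold beta
  rw [Submodule.liftQ_apply, tensorToGraded_of_tmul, gradedComp_of_mem hint z hg]

end Beta

theorem TensorCD.mk_of_comp_tmul {x y y' z : D} {f : y ⟶ y'} (hf : f ∈ deg y y' 1)
    (m : y' ⟶ z) (n : x ⟶ y) :
    (Submodule.Quotient.mk (of (fun y : D => ((y ⟶ z) ⊗[k] (x ⟶ y))) y ((f ≫ m) ⊗ₜ[k] n)) :
      TensorCD deg x z) =
    Submodule.Quotient.mk (of (fun y : D => ((y ⟶ z) ⊗[k] (x ⟶ y))) y' (m ⊗ₜ[k] (n ≫ f))) :=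
  (Submodule.Quotient.eq _).mpr (Submodule.subset_span ⟨y, y', f, hf, m, n, rfl⟩)

section Alpha

variable (ι : G → D → Type) [∀ s x, Fintype (ι s x)] (w : ∀ s x, ι s x → D)
  (c : ∀ s x (i : ι s x), w s x i ⟶ x) (d : ∀ s x (i : ι s x), x ⟶ w s x i)

variable (deg) in
noncomputable def alpha (x z : D) : (⨁ _ : G, (x ⟶ z)) →ₗ[k] TensorCD deg x z :=
  toModule k G _ fun s => ∑ i : ι s x,
    (tensorRel deg x z).mkQ ∘ₗ lof k D (fun y : D => ((y ⟶ z) ⊗[k] (x ⟶ y))) (w s x i) ∘ₗ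
      (TensorProduct.mk k _ _).flip (d s x i) ∘ₗ Linear.leftComp k z (c s x i)

theorem alpha_of (x z : D) (s : G) (f : x ⟶ z) :
    alpha deg ι w c d x z (of (fun _ : G => (x ⟶ z)) s f) =
      ∑ i : ι s x, Submodule.Quotient.mk
        (of (fun y : D => ((y ⟶ z) ⊗[k] (x ⟶ y))) (w s x i) ((c s x i ≫ f) ⊗ₜ[k] d s x i)) := by
  rw [alpha, ← lof_eq_of k, toModule_lof, LinearMap.sum_apply]
  rfl

variable {ι w c d}

theorem beta_comp_alpha (hint : ∀ x y : D, IsInternal (deg x y))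
    (hcomp : CompRespectsDegree deg)
    (hd : ∀ s x i, d s x i ∈ deg x (w s x i) s)
    (hunit : ∀ s x, (∑ i : ι s x, d s x i ≫ c s x i) = 𝟙 x) (x z : D) :
    beta hint hcomp x z ∘ₗ alpha deg ι w c d x z = LinearMap.id := by
  refine DirectSum.linearMap_ext _ fun s => LinearMap.ext fun f => ?_
  simp only [LinearMap.comp_apply, lof_eq_of, LinearMap.id_apply, alpha_of, map_sum,
    beta_mk_of_mem hint hcomp z _ (hd s x _), ← Category.assoc]
  rw [← map_sum, ← Preadditive.sum_comp, hunit, Category.id_comp]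

theorem alpha_comp_beta (hint : ∀ x y : D, IsInternal (deg x y))
    (hcomp : CompRespectsDegree deg)
    (hc : ∀ s x i, c s x i ∈ deg (w s x i) x s⁻¹)
    (hunit : ∀ s x, (∑ i : ι s x, d s x i ≫ c s x i) = 𝟙 x) (x z : D) :
    alpha deg ι w c d x z ∘ₗ beta hint hcomp x z = LinearMap.id := by
  refine Submodule.linearMap_qext _ <| DirectSum.linearMap_ext _ fun y =>
    TensorProduct.ext' fun f g => ?_
  simp only [LinearMap.comp_apply, Submodule.mkQ_apply, lof_eq_of, LinearMap.id_apply]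
  induction g using (hint x y).induction_on with
  | mem s g hg =>
    have hcg : ∀ i, c s x i ≫ g ∈ deg (w s x i) y 1 := fun i =>
      mul_inv_cancel s ▸ hcomp _ _ (hc s x i) hg
    simp only [beta_mk_of_mem hint hcomp z f hg, alpha_of, ← Category.assoc,
      TensorCD.mk_of_comp_tmul (hcg _)]
    simp only [← Submodule.mkQ_apply]
    rw [← map_sum, ← map_sum, ← TensorProduct.tmul_sum, ← Preadditive.sum_comp, hunit,
      Category.id_comp]
  | zero => simp
  | add g g' h h' =>
    simp only [TensorProduct.tmul_add, map_add, Submodule.Quotient.mk_add, h, h']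

end Alpha

end GradedCategory

theorem stmt_8_general (deg : ∀ x y : D, G → Submodule k (x ⟶ y))
    (hinternal : ∀ x y : D, DirectSum.IsInternal (deg x y))
    (hcomp : ∀ {x y z : D} {s t : G} (g : x ⟶ y) (f : y ⟶ z),
      g ∈ deg x y t → f ∈ deg y z s → g ≫ f ∈ deg x z (s * t))
    -- the chosen local "Galois coordinates"
    (ι : G → D → Type) [∀ s x, Fintype (ι s x)]
    (w : ∀ s x, ι s x → D)
    (c : ∀ s x (i : ι s x), w s x i ⟶ x)
    (d : ∀ s x (i : ι s x), x ⟶ w s x i)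
    (hc : ∀ s x i, c s x i ∈ deg (w s x i) x s⁻¹)
    (hd : ∀ s x i, d s x i ∈ deg x (w s x i) s)
    (hunit : ∀ s x, (∑ i : ι s x, d s x i ≫ c s x i) = 𝟙 x) :
    ∃ (β : ∀ x z : D, TensorCD deg x z →ₗ[k] (⨁ _ : G, (x ⟶ z)))
      (α : ∀ x z : D, (⨁ _ : G, (x ⟶ z)) →ₗ[k] TensorCD deg x z),
      (∀ (x z y : D) (f : y ⟶ z) (s : G) (g : x ⟶ y), g ∈ deg x y s →
        β x z (Submodule.Quotient.mk
            (DirectSum.of (fun y : D => ((y ⟶ z) ⊗[k] (x ⟶ y))) y (f ⊗ₜ[k] g))) =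
        DirectSum.of (fun _ : G => (x ⟶ z)) s (g ≫ f)) ∧
      (∀ (x z : D) (s : G) (f : x ⟶ z),
        α x z (DirectSum.of (fun _ : G => (x ⟶ z)) s f) =
        ∑ i : ι s x, Submodule.Quotient.mk
          (DirectSum.of (fun y : D => ((y ⟶ z) ⊗[k] (x ⟶ y))) (w s x i)
            ((c s x i ≫ f) ⊗ₜ[k] d s x i))) ∧
      (∀ x z : D, (α x z).comp (β x z) = LinearMap.id) ∧
      (∀ x z : D, (β x z).comp (α x z) = LinearMap.id) :=
  ⟨GradedCategory.beta hinternal hcomp, GradedCategory.alpha deg ι w c d,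
    fun _ z _ f _ _ hg => GradedCategory.beta_mk_of_mem hinternal hcomp z f hg,
    GradedCategory.alpha_of ι w c d,
    GradedCategory.alpha_comp_beta hinternal hcomp hc hunit,
    GradedCategory.beta_comp_alpha hinternal hcomp hd hunit⟩

theorem stmt_8 (deg : ∀ x y : D, G → Submodule k (x ⟶ y))
    (hinternal : ∀ x y : D, DirectSum.IsInternal (deg x y))
    (hcomp : ∀ {x y z : D} {s t : G} (g : x ⟶ y) (f : y ⟶ z),
      g ∈ deg x y t → f ∈ deg y z s → g ≫ f ∈ deg x z (s * t))
    (hid : ∀ x : D, 𝟙 x ∈ deg x x 1)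
    (hstrong : ∀ (s t : G) (x z : D), gradedSpan deg s t x z = deg x z (s * t))
    -- the chosen local "Galois coordinates"
    (ι : G → D → Type) [∀ s x, Fintype (ι s x)]
    (w : ∀ s x, ι s x → D)
    (c : ∀ s x (i : ι s x), w s x i ⟶ x)
    (d : ∀ s x (i : ι s x), x ⟶ w s x i)
    (hc : ∀ s x i, c s x i ∈ deg (w s x i) x s⁻¹)
    (hd : ∀ s x i, d s x i ∈ deg x (w s x i) s)
    (hunit : ∀ s x, (∑ i : ι s x, d s x i ≫ c s x i) = 𝟙 x) :
    ∃ (β : ∀ x z : D, TensorCD deg x z →ₗ[k] (⨁ _ : G, (x ⟶ z)))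
      (α : ∀ x z : D, (⨁ _ : G, (x ⟶ z)) →ₗ[k] TensorCD deg x z),
      (∀ (x z y : D) (f : y ⟶ z) (s : G) (g : x ⟶ y), g ∈ deg x y s →
        β x z (Submodule.Quotient.mk
            (DirectSum.of (fun y : D => ((y ⟶ z) ⊗[k] (x ⟶ y))) y (f ⊗ₜ[k] g))) =
        DirectSum.of (fun _ : G => (x ⟶ z)) s (g ≫ f)) ∧
      (∀ (x z : D) (s : G) (f : x ⟶ z),
        α x z (DirectSum.of (fun _ : G => (x ⟶ z)) s f) =
        ∑ i : ι s x, Submodule.Quotient.mk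
          (DirectSum.of (fun y : D => ((y ⟶ z) ⊗[k] (x ⟶ y))) (w s x i)
            ((c s x i ≫ f) ⊗ₜ[k] d s x i))) ∧
      (∀ x z : D, (α x z).comp (β x z) = LinearMap.id) ∧
      (∀ x z : D, (β x z).comp (α x z) = LinearMap.id) :=
  stmt_8_general deg hinternal hcomp ι w c d hc hd hunit

end
end
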